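/- With Φ(r) = −(r·E_p) exp(i k₀ û·r) and Ã(r) = −k₀ (r·E_p) exp(i k₀ û·r) û, where û·E_p = 0 and ‖û‖ = 1, the Lorenz gauge condition ∇·Ã = i k₀² Φ holds. -/

import Mathlib

open Finset

/-- Euclidean dot product on ℝ³. -/
def rdot (a b : Fin 3 → ℝ) : ℝ := ∑ i, a i * b i

/-- Partial derivative of a complex scalar field on ℝ³ in direction `i`. -/
noncomputable def pdC (i : Fin 3) (f : (Fin 3 → ℝ) → ℂ) (x : Fin 3 → ℝ) : ℂ :=
  fderiv ℝ f x (Pi.single i 1)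

/-! Differentiating `Ã_j = c (r·E) e^{i k u·r} u_j` by the product and chain rules gives
`∂_j Ã_j = c (E_j + i k u_j (r·E)) e^{i k u·r} u_j`; summing over `j`, the first term is
`c (u·E) e^{i k u·r} = 0` and the second is `i k (u·u) c (r·E) e^{i k u·r} = i k² Φ` for `c = -k`. -/

lemma rdot_comm (a b : Fin 3 → ℝ) : rdot a b = rdot b a := by
  simp only [rdot, mul_comm]

lemma rdot_single (v : Fin 3 → ℝ) (j : Fin 3) : rdot v (Pi.single j 1) = v j := by
  simp [rdot, Pi.single_apply]

lemma ofReal_rdot (a b : Fin 3 → ℝ) : ((rdot a b : ℝ) : ℂ) = ∑ j, (a j : ℂ) * b j := by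
  simp [rdot]

noncomputable def rdotCLM (v : Fin 3 → ℝ) : (Fin 3 → ℝ) →L[ℝ] ℂ :=
  Complex.ofRealCLM.comp (∑ i, v i • ContinuousLinearMap.proj i)

@[simp]
lemma rdotCLM_apply (v w : Fin 3 → ℝ) : rdotCLM v w = ((rdot v w : ℝ) : ℂ) := by
  simp [rdotCLM, rdot]

lemma hasFDerivAt_ofReal_rdot (v x : Fin 3 → ℝ) :
    HasFDerivAt (fun s => ((rdot v s : ℝ) : ℂ)) (rdotCLM v) x := by
  convert (rdotCLM v).hasFDerivAt (x := x) using 1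
  exact funext fun s => (rdotCLM_apply v s).symm

lemma pdC_plane_wave (k : ℝ) (c d : ℂ) (u E r : Fin 3 → ℝ) (j : Fin 3) :
    pdC j (fun s => c * ((rdot s E : ℝ) : ℂ) * Complex.exp (Complex.I * k * rdot u s) * d) r
      = c * (E j + Complex.I * k * u j * rdot r E) * Complex.exp (Complex.I * k * rdot u r)
          * d := by
  have hamp : HasFDerivAt (fun s => c * ((rdot s E : ℝ) : ℂ)) (c • rdotCLM E) r := by
    simpa only [rdot_comm _ E] using (hasFDerivAt_ofReal_rdot E r).const_mul c
  have hphase : HasFDerivAt (fun s => Complex.exp (Complex.I * k * rdot u s))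
      (Complex.exp (Complex.I * k * rdot u r) • (Complex.I * k) • rdotCLM u) r :=
    ((hasFDerivAt_ofReal_rdot u r).const_mul (Complex.I * k)).cexp
  have hwave : HasFDerivAt
      (fun s => c * ((rdot s E : ℝ) : ℂ) * Complex.exp (Complex.I * k * rdot u s) * d) _ r :=
    (hamp.mul hphase).mul_const d
  rw [pdC, hwave.fderiv]
  simp only [smul_add, add_apply, smul_apply, rdotCLM_apply, rdot_single, smul_eq_mul]
  ring

theorem plane_wave_lorenz_gauge_general (k₀ : ℝ)
    (u Ep : Fin 3 → ℝ) (hu : rdot u u = 1) (hperp : rdot u Ep = 0) :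
    ∀ r : Fin 3 → ℝ,
      (∑ j, pdC j (fun s => -(k₀ : ℂ) * ((rdot s Ep : ℝ) : ℂ)
          * Complex.exp (Complex.I * k₀ * rdot u s) * ((u j : ℝ) : ℂ)) r)
        = Complex.I * (k₀ : ℂ) ^ 2
            * (-((rdot r Ep : ℝ) : ℂ) * Complex.exp (Complex.I * k₀ * rdot u r)) := by
  intro r
  set e := Complex.exp (Complex.I * k₀ * rdot u r)
  simp only [pdC_plane_wave]
  calc ∑ j, -(k₀ : ℂ) * (Ep j + Complex.I * k₀ * u j * rdot r Ep) * e * u j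
      = -(k₀ : ℂ) * e * ∑ j, (u j : ℂ) * Ep j
          + -(k₀ : ℂ) * e * Complex.I * k₀ * rdot r Ep * ∑ j, (u j : ℂ) * u j := by
        simp only [mul_sum, ← sum_add_distrib]
        exact sum_congr rfl fun j _ => by ring
    _ = _ := by
        rw [← ofReal_rdot, ← ofReal_rdot, hu, hperp]
        push_cast
        ring

/-- With `Φ(r) = −(r·E_p) exp(i k₀ û·r)` and `Ã(r) = −k₀ (r·E_p) exp(i k₀ û·r) û`,
where `û·E_p = 0` and `‖û‖ = 1`, the Lorenz gauge condition `∇·Ã = i k₀² Φ` holds. -/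
theorem plane_wave_lorenz_gauge (k₀ : ℝ) (hk : 0 < k₀)
    (u Ep : Fin 3 → ℝ) (hu : rdot u u = 1) (hperp : rdot u Ep = 0) :
    ∀ r : Fin 3 → ℝ,
      (∑ j, pdC j (fun s => -(k₀ : ℂ) * ((rdot s Ep : ℝ) : ℂ)
          * Complex.exp (Complex.I * k₀ * rdot u s) * ((u j : ℝ) : ℂ)) r)
        = Complex.I * (k₀ : ℂ) ^ 2
            * (-((rdot r Ep : ℝ) : ℂ) * Complex.exp (Complex.I * k₀ * rdot u r)) :=
  plane_wave_lorenz_gauge_general k₀ u Ep hu hperp
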